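/- For every a ∈ K \ {-1,0,1/2,1,2}, the projectivities of P^3_K induced by the matrices M_1 = [[2,2,2,0],[0,-2,0,0],[-2,0,0,0],[0,1,3,-2]] and M_2 = [[2,2,2,0],[0,-2,0,0],[0,0,-2,0],[0,-2,-3,2]] stabilise the quartic surface Q(a) = 0, i.e., Q(a) composed with M_i^{-1} is a nonzero scalar multiple of Q(a). -/

import Mathlib

/-- The quartic monoid `Q(a)` as a function of the homogeneous coordinates
`(x, y, z, t) = (v 0, v 1, v 2, v 3)`. -/
def Qa {K : Type*} [Field K] (a : K) (v : Fin 4 → K) : K :=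
  2*a*(v 0)^3*(v 1) + 4*a*(v 0)^2*(v 1)^2 + 2*a*(v 0)*(v 1)^3
    - (2*a - 1)*(a - 2)*(v 0)^3*(v 2)
    - (5*a^2 - 17*a + 5)*(v 0)^2*(v 1)*(v 2)
    - 3*(a^2 - 4*a + 1)*(v 0)*(v 1)^2*(v 2) + a*(v 1)^3*(v 2)
    - 3*(2*a - 1)*(a - 2)*(v 0)^2*(v 2)^2
    - (7*a^2 - 19*a + 7)*(v 0)*(v 1)*(v 2)^2 + 2*a*(v 1)^2*(v 2)^2
    - 2*(2*a - 1)*(a - 2)*(v 0)*(v 2)^3 + a*(v 1)*(v 2)^3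
    - 2*a*(v 3)*(v 0)^2*(v 1) - 2*a*(v 3)*(v 0)*(v 1)^2
    + 2*(2*a - 1)*(a - 2)*(v 3)*(v 0)^2*(v 2)
    + 4*(a^2 - 3*a + 1)*(v 3)*(v 0)*(v 1)*(v 2) - 2*a*(v 3)*(v 1)^2*(v 2)
    + 2*(2*a - 1)*(a - 2)*(v 3)*(v 0)*(v 2)^2 - 2*a*(v 3)*(v 1)*(v 2)^2

/-!
Both matrices satisfy `M * N = 4 • 1` for an explicit `N` (for `M₂`, `N = M₂`), so `M⁻¹` is a
scalar multiple of `N`. As `Q(a)` is homogeneous of degree 4, it then suffices that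
`Q(a) ∘ N = ±16 • Q(a)`, a polynomial identity in `a` and the coordinates.
-/

open Matrix

section Stabilizer

variable {n K : Type*} [Fintype n] [DecidableEq n] [Field K]

def StabilizesUpToScalar (M : Matrix n n K) (f : (n → K) → K) : Prop :=
  ∃ lam : K, lam ≠ 0 ∧ ∀ v, f (M⁻¹ *ᵥ v) = lam * f v

theorem Matrix.inv_eq_inv_smul_of_mul_eq_smul_one {M N : Matrix n n K} {c : K} (hc : c ≠ 0)
    (h : M * N = c • 1) : M⁻¹ = c⁻¹ • N :=
  inv_eq_right_inv <| by rw [Matrix.mul_smul, h, smul_smul, inv_mul_cancel₀ hc, one_smul]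

theorem stabilizesUpToScalar_of_mul_eq_smul_one {M N : Matrix n n K} {c μ : K} {f : (n → K) → K}
    {d : ℕ} (hf : ∀ (s : K) v, f (s • v) = s ^ d * f v) (hc : c ≠ 0) (hμ : μ ≠ 0)
    (h : M * N = c • 1) (hN : ∀ v, f (N *ᵥ v) = μ * f v) : StabilizesUpToScalar M f := by
  refine ⟨c⁻¹ ^ d * μ, mul_ne_zero (pow_ne_zero _ (inv_ne_zero hc)) hμ, fun v => ?_⟩
  rw [inv_eq_inv_smul_of_mul_eq_smul_one hc h, smul_mulVec, hf, hN, mul_assoc]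

end Stabilizer

section Quartic

variable {K : Type*} [Field K]

theorem Qa_smul (a s : K) (v : Fin 4 → K) : Qa a (s • v) = s ^ 4 * Qa a v := by
  simp only [Qa, Pi.smul_apply, smul_eq_mul]
  ring

def M₁ : Matrix (Fin 4) (Fin 4) K := !![2, 2, 2, 0; 0, -2, 0, 0; -2, 0, 0, 0; 0, 1, 3, -2]

def M₂ : Matrix (Fin 4) (Fin 4) K := !![2, 2, 2, 0; 0, -2, 0, 0; 0, 0, -2, 0; 0, -2, -3, 2]

def N₁ : Matrix (Fin 4) (Fin 4) K := !![0, 0, -2, 0; 0, -2, 0, 0; 2, 2, 2, 0; 3, 2, 3, -2]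

theorem M₁_mul_N₁ : (M₁ : Matrix (Fin 4) (Fin 4) K) * N₁ = (4 : K) • 1 := by
  ext i j
  fin_cases i <;> fin_cases j <;>
    norm_num [M₁, N₁, mul_apply, Fin.sum_univ_four, one_apply, cons_val_two, cons_val_three]

theorem M₂_mul_self : (M₂ : Matrix (Fin 4) (Fin 4) K) * M₂ = (4 : K) • 1 := by
  ext i j
  fin_cases i <;> fin_cases j <;>
    norm_num [M₂, mul_apply, Fin.sum_univ_four, one_apply, cons_val_two, cons_val_three]

theorem Qa_N₁_mulVec (a : K) (v : Fin 4 → K) : Qa a (N₁ *ᵥ v) = 16 * Qa a v := by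
  simp only [Qa, N₁, mulVec, dotProduct, Fin.sum_univ_four, of_apply, cons_val', cons_val_zero,
    cons_val_one, cons_val, cons_val_fin_one]
  ring

theorem Qa_M₂_mulVec (a : K) (v : Fin 4 → K) : Qa a (M₂ *ᵥ v) = -16 * Qa a v := by
  simp only [Qa, M₂, mulVec, dotProduct, Fin.sum_univ_four, of_apply, cons_val', cons_val_zero,
    cons_val_one, cons_val, cons_val_fin_one]
  ring

end Quartic

theorem stmt16_general {K : Type*} [Field K] [CharZero K] (a : K) :
    ∀ M ∈ ({!![2, 2, 2, 0; 0, -2, 0, 0; -2, 0, 0, 0; 0, 1, 3, -2],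
             !![2, 2, 2, 0; 0, -2, 0, 0; 0, 0, -2, 0; 0, -2, -3, 2]} :
        Set (Matrix (Fin 4) (Fin 4) K)),
      ∃ lam : K, lam ≠ 0 ∧
        ∀ v : Fin 4 → K, Qa a (M⁻¹.mulVec v) = lam * Qa a v := by
  rintro M (rfl | rfl)
  · exact stabilizesUpToScalar_of_mul_eq_smul_one (Qa_smul a) (by norm_num) (by norm_num)
      M₁_mul_N₁ (Qa_N₁_mulVec a)
  · exact stabilizesUpToScalar_of_mul_eq_smul_one (Qa_smul a) (by norm_num) (by norm_num)
      M₂_mul_self (Qa_M₂_mulVec a)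

/-- for every `a ∉ {-1, 0, 1/2, 1, 2}`, the projectivities
induced by the matrices `M₁` and `M₂` stabilise the surface `Q(a) = 0`:
`Q(a)` composed with `Mᵢ⁻¹` is a nonzero scalar multiple of `Q(a)`. -/
theorem stmt16 {K : Type*} [Field K] [CharZero K] (a : K)
    (ha : a ≠ -1 ∧ a ≠ 0 ∧ a ≠ 1/2 ∧ a ≠ 1 ∧ a ≠ 2) :
    ∀ M ∈ ({!![2, 2, 2, 0; 0, -2, 0, 0; -2, 0, 0, 0; 0, 1, 3, -2],
             !![2, 2, 2, 0; 0, -2, 0, 0; 0, 0, -2, 0; 0, -2, -3, 2]} :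
        Set (Matrix (Fin 4) (Fin 4) K)),
      ∃ lam : K, lam ≠ 0 ∧
        ∀ v : Fin 4 → K, Qa a (M⁻¹.mulVec v) = lam * Qa a v :=
  stmt16_general a
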